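/- Let η be a complex number with η ≠ −1, and set η̃ = −1 − b_1/(1+η). Writing ρ_h = f_h(η̃)·k_h^{−1} for h = 0, 1, 2, we have ρ_0 − ρ_2 + η(ρ_1 − ρ_2) = 0. -/

import Mathlib

open Matrix Polynomial BigOperators

noncomputable section

variable {X : Type*} [Fintype X] [DecidableEq X]

/-- The `i`-th distance matrix of the graph `G` (indexed by `ℤ`; by convention it is
the zero matrix for `i < 0` and also for `i` larger than the diameter). -/
def distMat (G : SimpleGraph X) (i : ℤ) : Matrix X X ℂ :=
  Matrix.of fun y z => if (G.dist y z : ℤ) = i then (1 : ℂ) else 0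

/-- The all-ones matrix `J`. -/
def allOnes (X : Type*) : Matrix X X ℂ := Matrix.of fun _ _ => (1 : ℂ)

/-- The `i`-th dual idempotent `Eᵢ*` with respect to the base point `x`
(indexed by `ℤ`; zero for `i < 0` and for `i` larger than the diameter). -/
def dualIdem (G : SimpleGraph X) (x : X) (i : ℤ) : Matrix X X ℂ :=
  Matrix.of fun y z => if y = z ∧ (G.dist x y : ℤ) = i then (1 : ℂ) else 0

/-- The characteristic vector `sᵢ` of the `i`-th sphere around `x`. -/
def sphereVec (G : SimpleGraph X) (x : X) (i : ℤ) : X → ℂ :=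
  fun y => if (G.dist x y : ℤ) = i then (1 : ℂ) else 0

/-- `G` is distance-regular with diameter `D` and intersection numbers `p h i j`:
`G` is connected with diameter `D`, and for all `h,i,j ≤ D` and all vertices `y,z`
at distance `h`, the number of vertices `w` with `dist y w = i` and `dist w z = j`
equals `p h i j`. -/
def IsDRG (G : SimpleGraph X) (D : ℕ) (p : ℕ → ℕ → ℕ → ℕ) : Prop :=
  G.Connected ∧ (∀ y z : X, G.dist y z ≤ D) ∧ (∃ y z : X, G.dist y z = D) ∧
    ∀ h i j : ℕ, h ≤ D → i ≤ D → j ≤ D → ∀ y z : X, G.dist y z = h →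
      (Finset.univ.filter fun w => G.dist y w = i ∧ G.dist w z = j).card = p h i j

/-- The Bose–Mesner algebra `M`, the subalgebra of `Mat_X(ℂ)` generated by the
adjacency matrix. -/
def bmAlg (G : SimpleGraph X) : Subalgebra ℂ (Matrix X X ℂ) :=
  Algebra.adjoin ℂ {distMat G 1}

/-- The Terwilliger algebra `T`, generated by `A, E₀*, …, E_D*`. -/
def twAlg (G : SimpleGraph X) (x : X) (D : ℕ) : Subalgebra ℂ (Matrix X X ℂ) :=
  Algebra.adjoin ℂ ({distMat G 1} ∪ {B | ∃ i : ℕ, i ≤ D ∧ B = dualIdem G x (i : ℤ)})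

/-- `W` is a `T`-module. -/
def IsTMod (G : SimpleGraph X) (x : X) (D : ℕ) (W : Submodule ℂ (X → ℂ)) : Prop :=
  ∀ B ∈ twAlg G x D, ∀ w ∈ W, B.mulVec w ∈ W

/-- `W` is an irreducible `T`-module. -/
def IsIrredTMod (G : SimpleGraph X) (x : X) (D : ℕ) (W : Submodule ℂ (X → ℂ)) : Prop :=
  IsTMod G x D W ∧ W ≠ ⊥ ∧
    ∀ U : Submodule ℂ (X → ℂ), U ≤ W → IsTMod G x D U → U = ⊥ ∨ U = W

/-- `W` is thin: `dim Eᵢ* W ≤ 1` for `0 ≤ i ≤ D`. -/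
def IsThin (G : SimpleGraph X) (x : X) (D : ℕ) (W : Submodule ℂ (X → ℂ)) : Prop :=
  ∀ i : ℕ, i ≤ D → Module.finrank ℂ (W.map (dualIdem G x (i : ℤ)).mulVecLin) ≤ 1

/-- `W` has endpoint `1`, i.e. `E₀* W = 0` and `E₁* W ≠ 0`. -/
def HasEndpointOne (G : SimpleGraph X) (x : X) (W : Submodule ℂ (X → ℂ)) : Prop :=
  W.map (dualIdem G x 0).mulVecLin = ⊥ ∧ W.map (dualIdem G x 1).mulVecLin ≠ ⊥

/-- The linear map `P ↦ P v` on matrices. -/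
def actOn (v : X → ℂ) : Matrix X X ℂ →ₗ[ℂ] (X → ℂ) where
  toFun P := P.mulVec v
  map_add' P Q := Matrix.add_mulVec P Q v
  map_smul' c P := by simp [Matrix.smul_mulVec]

/-- The subspace `(M; v) = {P ∈ M : P v ∈ E_D* V}`. -/
def MsubV (G : SimpleGraph X) (x : X) (D : ℕ) (v : X → ℂ) : Submodule ℂ (Matrix X X ℂ) :=
  (bmAlg G).toSubmodule ⊓
    Submodule.comap (actOn v) (LinearMap.range (dualIdem G x (D : ℤ)).mulVecLin)

/-- The space `M(θ) = {Y ∈ M : (A - θI) Y ∈ ℂ A_D}` for `θ ∈ ℂ`. -/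
def pseudoSpace (G : SimpleGraph X) (D : ℕ) (θ : ℂ) : Submodule ℂ (Matrix X X ℂ) :=
  (bmAlg G).toSubmodule ⊓
    Submodule.comap (LinearMap.mulLeft ℂ (distMat G 1 - θ • 1))
      (Submodule.span ℂ {distMat G (D : ℤ)})

/-! Evaluating the recurrence at `η̃` gives `ρ₀ = 1`, `ρ₁ = η̃ / k` and
`ρ₂ = (η̃² - a₁ η̃ - k) / (c₂ k₂)`. Counting in the graph gives `c₁ = 1`, `k = c₁ + a₁ + b₁`
and `k₂ c₂ = k b₁`, so `ρ₂ = (η̃² - a₁ η̃ - k) / (k b₁)`; since `b₁ = -(1 + η)(1 + η̃)`, the claim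
becomes a polynomial identity in `k, a₁, η, η̃`. -/

namespace SimpleGraph

variable {V : Type*} {G : SimpleGraph V}

lemma Connected.exists_dist_eq_and_dist_eq_sub (hG : G.Connected) {u v : V} {m : ℕ}
    (hm : m ≤ G.dist u v) : ∃ w, G.dist u w = m ∧ G.dist w v = G.dist u v - m := by
  obtain ⟨q, hq⟩ := hG.exists_walk_length_eq_dist u v
  refine ⟨q.getVert m, ?_⟩
  have hu : G.dist u (q.getVert m) ≤ m := (dist_le (q.take m)).trans (by simp [Walk.take_length])
  have hv : G.dist (q.getVert m) v ≤ G.dist u v - m :=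
    (dist_le (q.drop m)).trans (by rw [Walk.drop_length, hq])
  have := hG.dist_triangle (u := u) (v := q.getVert m) (w := v)
  omega

end SimpleGraph

namespace IsDRG

variable {V : Type*} [Fintype V] {G : SimpleGraph V} {D : ℕ} {p : ℕ → ℕ → ℕ → ℕ}

lemma card_filter_dist_eq (hG : IsDRG G D p) {h i j : ℕ} (hh : h ≤ D) (hi : i ≤ D)
    (hj : j ≤ D) {y z : V} (hyz : G.dist y z = h) :
    (Finset.univ.filter fun w => G.dist y w = i ∧ G.dist w z = j).card = p h i j :=
  hG.2.2.2 h i j hh hi hj y z hyz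

lemma exists_dist_eq (hG : IsDRG G D p) {h : ℕ} (hh : h ≤ D) : ∃ y z, G.dist y z = h := by
  obtain ⟨hconn, -, ⟨y, z, hyz⟩, -⟩ := hG
  obtain ⟨w, hw, -⟩ := hconn.exists_dist_eq_and_dist_eq_sub (u := y) (v := z) (hyz ▸ hh)
  exact ⟨y, w, hw⟩

lemma card_sphere (hG : IsDRG G D p) {i : ℕ} (hi : i ≤ D) (y : V) :
    (Finset.univ.filter fun w => G.dist y w = i).card = p 0 i i := by
  rw [← hG.card_filter_dist_eq (Nat.zero_le D) hi hi (SimpleGraph.dist_self (v := y))]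
  congr 1
  ext w
  simp [SimpleGraph.dist_comm (u := w)]

lemma intersection_zero_right (hG : IsDRG G D p) {h i : ℕ} (hh : h ≤ D) (hi : i ≤ D) :
    p h i 0 = if i = h then 1 else 0 := by
  obtain ⟨y, z, hyz⟩ := hG.exists_dist_eq hh
  have hfilter : (Finset.univ.filter fun w => G.dist y w = i ∧ G.dist w z = 0) =
      ({z} : Finset V).filter fun w => G.dist y w = i := by
    ext w
    simp [hG.1.dist_eq_zero_iff, and_comm]
  rw [← hG.card_filter_dist_eq hh hi (Nat.zero_le D) hyz, hfilter, Finset.filter_singleton, hyz]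
  by_cases hih : i = h <;> simp [hih, Ne.symm]

lemma valency_eq_c_add_a_add_b (hG : IsDRG G D p) {h : ℕ} (hh₀ : 1 ≤ h) (hh : h + 1 ≤ D) :
    p 0 1 1 = p h 1 (h - 1) + p h 1 h + p h 1 (h + 1) := by
  obtain ⟨y, z, hyz⟩ := hG.exists_dist_eq (h := h) (by omega)
  have hcard := fun j (hj : j ≤ D) => hG.card_filter_dist_eq (i := 1) (by omega) (by omega) hj hyz
  rw [← hG.card_sphere (by omega) y, ← hcard (h - 1) (by omega), ← hcard h (by omega),
    ← hcard (h + 1) hh]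
  simp only [Finset.card_filter, ← Finset.sum_add_distrib]
  refine Finset.sum_congr rfl fun w _ => ?_
  have := hG.1.dist_triangle (u := y) (v := w) (w := z)
  have := hG.1.dist_triangle (u := w) (v := y) (w := z)
  have := SimpleGraph.dist_comm (G := G) (u := y) (v := w)
  split_ifs <;> omega

lemma valency_mul_intersection (hG : IsDRG G D p) {h i j : ℕ} (hh : h ≤ D) (hi : i ≤ D)
    (hj : j ≤ D) : p 0 h h * p h i j = p 0 i i * p i j h := by
  obtain ⟨y, -⟩ := hG.exists_dist_eq hh
  rw [← hG.card_sphere hh y, ← hG.card_sphere hi y]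
  refine Finset.card_mul_eq_card_mul (fun z w => G.dist w z = j) (fun z hz => ?_) (fun w hw => ?_)
  · rw [Finset.mem_filter] at hz
    rw [← hG.card_filter_dist_eq hh hi hj hz.2, Finset.bipartiteAbove, Finset.filter_filter]
  · rw [Finset.mem_filter, SimpleGraph.dist_comm] at hw
    rw [← hG.card_filter_dist_eq hi hj hh hw.2, Finset.bipartiteBelow, Finset.filter_filter]
    congr 1
    ext z
    simp [SimpleGraph.dist_comm (u := z), and_comm]

lemma valency_pos (hG : IsDRG G D p) {h : ℕ} (hh : h ≤ D) : 0 < p 0 h h := by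
  obtain ⟨y, z, hyz⟩ := hG.exists_dist_eq hh
  rw [← hG.card_sphere hh y]
  exact Finset.card_pos.2 ⟨z, by simpa using hyz⟩

lemma intersection_pos_of_add_eq (hG : IsDRG G D p) {h i j : ℕ} (hh : h ≤ D) (hij : i + j = h) :
    0 < p h i j := by
  obtain ⟨y, z, hyz⟩ := hG.exists_dist_eq hh
  obtain ⟨w, hyw, hwz⟩ :=
    hG.1.exists_dist_eq_and_dist_eq_sub (u := y) (v := z) (m := i) (by omega)
  rw [← hG.card_filter_dist_eq hh (by omega) (by omega) hyz]
  exact Finset.card_pos.2 ⟨w, by simp [hyw, hwz]; omega⟩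

end IsDRG

lemma one_sub_div_add_mul_sub_div_eq_zero {K : Type*} [Field K] {a b c k k₂ η η' e : K}
    (hc : c ≠ 0) (hk : k ≠ 0) (hk₂ : k₂ ≠ 0) (hη : 1 + η ≠ 0) (hk_eq : k = 1 + a + b)
    (hkc : k₂ * c = k * b) (he : η' * η' = k + a * η' + c * e)
    (hη' : η' = -1 - b / (1 + η)) :
    1 - e / k₂ + η * (η' / k - e / k₂) = 0 := by
  have hbη' : η' * (1 + η) = -(1 + η) - b := by rw [hη']; field_simp
  have hcleared : c * (k * k₂ - e * k + η * (η' * k₂ - e * k)) = 0 := by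
    linear_combination (k + η * η') * hkc + (1 + η) * k * he +
      k * (-(1 + η) * η' * hk_eq + (k - η') * hbη')
  field_simp
  linear_combination (mul_eq_zero.1 hcleared).resolve_left hc

/-- Let `η ≠ -1` be complex, `η̃ = -1 - b₁/(1+η)`, and
`ρ_h = f_h(η̃) k_h⁻¹` for `h = 0, 1, 2`.  Then `ρ₀ - ρ₂ + η(ρ₁ - ρ₂) = 0`.
Here `f₀ = 1` and `λ fⱼ = b_{j-1} f_{j-1} + aⱼ fⱼ + c_{j+1} f_{j+1}`, with
`aⱼ = p j 1 j`, `b_{j-1} = p (j-1) 1 j`, `c_{j+1} = p (j+1) 1 j`, `k_h = p 0 h h`,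
and `b₁ = p 1 1 2`. -/
theorem stmt17 (G : SimpleGraph X) (D : ℕ) (p : ℕ → ℕ → ℕ → ℕ)
    (hdrg : IsDRG G D p) (hD : 3 ≤ D)
    (f : ℕ → Polynomial ℂ) (hf0 : f 0 = 1)
    (hfrec0 : Polynomial.X * f 0 =
      Polynomial.C (p 0 1 0 : ℂ) * f 0 + Polynomial.C (p 1 1 0 : ℂ) * f 1)
    (hfrec : ∀ j : ℕ, 1 ≤ j → j ≤ D - 1 →
      Polynomial.X * f j =
        Polynomial.C (p (j - 1) 1 j : ℂ) * f (j - 1) +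
        Polynomial.C (p j 1 j : ℂ) * f j +
        Polynomial.C (p (j + 1) 1 j : ℂ) * f (j + 1))
    (η : ℂ) (hη : η ≠ -1)
    (η' : ℂ) (hη' : η' = -1 - (p 1 1 2 : ℂ) / (1 + η))
    (ρ : ℕ → ℂ) (hρ : ∀ h : ℕ, ρ h = (f h).eval η' * ((p 0 h h : ℂ))⁻¹) :
    ρ 0 - ρ 2 + η * (ρ 1 - ρ 2) = 0 := by
  have hk₀ : p 0 0 0 = 1 := by
    simpa using hdrg.intersection_zero_right (h := 0) (i := 0) D.zero_le D.zero_le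
  have hp₀₁₀ : p 0 1 0 = 0 := by
    simpa using hdrg.intersection_zero_right (h := 0) (i := 1) (by omega) (by omega)
  have hc₁ : p 1 1 0 = 1 := by
    simpa using hdrg.intersection_zero_right (h := 1) (i := 1) (by omega) (by omega)
  have hk : p 0 1 1 = p 1 1 0 + p 1 1 1 + p 1 1 2 :=
    hdrg.valency_eq_c_add_a_add_b le_rfl (by omega)
  have hkc : (p 0 2 2 * p 2 1 1 : ℂ) = p 0 1 1 * p 1 1 2 := by
    exact_mod_cast hdrg.valency_mul_intersection (by omega) (by omega) (by omega)
  have hc₂ : 0 < p 2 1 1 := hdrg.intersection_pos_of_add_eq (by omega) rfl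
  have hk₂ : 0 < p 0 2 2 := hdrg.valency_pos (by omega)
  have hf₁ : f 1 = Polynomial.X := by simpa [hf0, hp₀₁₀, hc₁] using hfrec0.symm
  have hf₂ := congrArg (eval η') (hfrec 1 le_rfl (by omega))
  simp only [hf0, hf₁, eval_mul, eval_add, eval_X, eval_C, Nat.sub_self, mul_one] at hf₂
  simp only [hρ, hf0, hf₁, hk₀, eval_one, eval_X, Nat.cast_one, inv_one, mul_one,
    ← div_eq_mul_inv]
  refine one_sub_div_add_mul_sub_div_eq_zero (by norm_cast; omega) (by norm_cast; omega)
    (by norm_cast; omega) (fun h => hη (by linear_combination h)) ?_ hkc hf₂ hη'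
  rw [hk, hc₁]
  push_cast
  ring
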